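/- arXiv:2504.16852 — 4 statements merged into one kernel-verified Lean document; each statement's English description precedes it below -/
import Mathlib

section
/- For two agents with valuations v_1(o_1) = z + ε, v_1(o_2) = z, v_2(o_1) = y, v_2(o_2) = y + δ, and v_1(a_1) = v_1(a_2) = V_1, v_2(a_1) = v_2(a_2) = V_2, where y, z, ε, δ, V_1, V_2 > 0, no assignment of the new apartments a_1, a_2 together with any payment vector is envy-free. That is, for any bijective assignment A and any p_1, p_2 ∈ ℝ, either v_1(A_1) - v_1(o_1) + p_1 < v_1(A_2) - v_1(o_2) + p_2 or v_2(A_2) - v_2(o_2) + p_2 < v_2(A_1) - v_2(o_1) + p_1. -/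
/-- With the given two-agent valuations, no assignment of the new apartments together
with any payment vector is envy-free. -/
theorem stmt3 (z y ε δ V1 V2 : ℝ)
    (hz : 0 < z) (hy : 0 < y) (hε : 0 < ε) (hδ : 0 < δ) (hV1 : 0 < V1) (hV2 : 0 < V2)
    (vo va : Fin 2 → Fin 2 → ℝ)
    (hvo00 : vo 0 0 = z + ε) (hvo01 : vo 0 1 = z)
    (hvo10 : vo 1 0 = y) (hvo11 : vo 1 1 = y + δ)
    (hva0 : ∀ j : Fin 2, va 0 j = V1) (hva1 : ∀ j : Fin 2, va 1 j = V2)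
    (A : Fin 2 → Fin 2) (hA : Function.Bijective A) (p : Fin 2 → ℝ) :
    (va 0 (A 0) - vo 0 0 + p 0 < va 0 (A 1) - vo 0 1 + p 1) ∨
    (va 1 (A 1) - vo 1 1 + p 1 < va 1 (A 0) - vo 1 0 + p 0) := by
  by_contra h
  push_neg at h
  obtain ⟨h1, h2⟩ := h
  have := hva0 (A 0); have := hva0 (A 1); have := hva1 (A 0); have := hva1 (A 1)
  linarith
end

section
/- With the payment vector defined by p_i = DP_i(A, 0) - DP_N(A)/n for each agent i, the vector p is balanced (∑_i p_i = 0) and every agent's disproportionality equals DP_N(A)/n: DP_i(A, p) = DP_N(A)/n for all i. Consequently, min over payment vectors p of max_i DP_i(A, p) equals DP_N(A)/n. -/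
/-!
Write `DP_i(q)` for agent `i`'s disproportionality under payments `q`. A payment vector shifts
it by `𝔼 q - q i`, a term that averages to zero over the agents, so the average disproportionality
`DP_N(A)/n` does not depend on the payments. Hence under any payments some agent's
disproportionality is at least `DP_N(A)/n`, while the payments `DP_i(0) - DP_N(A)/n`, which sum to
zero, cancel the deviation of every `DP_i(0)` from that average.
-/

open Finset
open scoped BigOperators

namespace Disproportionality

variable {ι : Type*} [Fintype ι]

/-- `u i j = v_i(A_j) - v_i(o_j)`, so that `disproportionality u p i` is `DP_i(A, p)`. -/
noncomputable def disproportionality (u : ι → ι → ℝ) (q : ι → ℝ) (i : ι) : ℝ :=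
  𝔼 j, (u i j + q j) - (u i i + q i)

noncomputable def equalizingPayment (u : ι → ι → ℝ) (i : ι) : ℝ :=
  disproportionality u 0 i - 𝔼 k, disproportionality u 0 k

lemma disproportionality_eq_add (u : ι → ι → ℝ) (q : ι → ℝ) (i : ι) :
    disproportionality u q i = disproportionality u 0 i + (𝔼 j, q j - q i) := by
  simp only [disproportionality, expect_add_distrib, Pi.zero_apply, add_zero]
  ring

lemma sum_sub_expect (f : ι → ℝ) : ∑ i, (f i - 𝔼 j, f j) = 0 := by
  rw [sum_sub_distrib, sum_const, card_univ, Fintype.card_smul_expect, sub_self]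

lemma expect_disproportionality [Nonempty ι] (u : ι → ι → ℝ) (q : ι → ℝ) :
    𝔼 i, disproportionality u q i = 𝔼 i, disproportionality u 0 i := by
  simp only [disproportionality_eq_add u q, expect_add_distrib, expect_sub_distrib,
    Fintype.expect_const, sub_self, add_zero]

lemma exists_expect_le_disproportionality [Nonempty ι] (u : ι → ι → ℝ) (q : ι → ℝ) :
    ∃ i, 𝔼 k, disproportionality u 0 k ≤ disproportionality u q i := by
  obtain ⟨i, -, hi⟩ := exists_le_of_le_expect univ_nonempty (expect_disproportionality u q).ge
  exact ⟨i, hi⟩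

lemma sum_equalizingPayment (u : ι → ι → ℝ) : ∑ i, equalizingPayment u i = 0 :=
  sum_sub_expect _

lemma disproportionality_equalizingPayment (u : ι → ι → ℝ) (i : ι) :
    disproportionality u (equalizingPayment u) i = 𝔼 k, disproportionality u 0 k := by
  rw [disproportionality_eq_add, Fintype.expect_eq_sum_div_card, sum_equalizingPayment,
    equalizingPayment]
  ring

end Disproportionality

open Disproportionality in
/-- With payments `p_i = DP_i(A,0) - DP_N(A)/n`, the vector `p` is balanced and every
agent's disproportionality equals `DP_N(A)/n`; consequently the minimum over payment
vectors of the maximum disproportionality equals `DP_N(A)/n`. -/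
theorem stmt13 {Apt : Type*} {n : ℕ} (hn : 0 < n)
    (v : Fin n → Apt → ℝ) (o A : Fin n → Apt)
    (DP0 : Fin n → ℝ)
    (hDP0 : ∀ i, DP0 i =
      (1 / (n : ℝ)) * ∑ j, (v i (A j) - v i (o j)) - (v i (A i) - v i (o i)))
    (DPN : ℝ) (hDPN : DPN = ∑ i, DP0 i)
    (p : Fin n → ℝ) (hp : ∀ i, p i = DP0 i - DPN / n) :
    (∑ i, p i = 0) ∧
    (∀ i : Fin n,
      (1 / (n : ℝ)) * ∑ j, (v i (A j) - v i (o j) + p j) - (v i (A i) - v i (o i) + p i)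
        = DPN / n) ∧
    (∀ q : Fin n → ℝ, ∃ i : Fin n,
      (1 / (n : ℝ)) * ∑ j, (v i (A j) - v i (o j) + q j) - (v i (A i) - v i (o i) + q i)
        ≥ DPN / n) := by
  have : NeZero n := ⟨hn.ne'⟩
  set u : Fin n → Fin n → ℝ := fun i j => v i (A j) - v i (o j)
  have hmean (f : Fin n → ℝ) : 1 / (n : ℝ) * ∑ j, f j = 𝔼 j, f j := by
    rw [Fintype.expect_eq_sum_div_card, Fintype.card_fin, one_div_mul_eq_div]
  have hdp (q : Fin n → ℝ) (i : Fin n) :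
      1 / (n : ℝ) * ∑ j, (v i (A j) - v i (o j) + q j) - (v i (A i) - v i (o i) + q i)
        = disproportionality u q i := by
    rw [hmean]; rfl
  have hDP0' : DP0 = disproportionality u 0 := funext fun i => by
    rw [hDP0, ← hdp 0 i]
    simp only [Pi.zero_apply, add_zero]
  have hDPN' : DPN / n = 𝔼 k, disproportionality u 0 k := by
    rw [hDPN, hDP0', ← hmean, one_div_mul_eq_div]
  obtain rfl : p = equalizingPayment u := funext fun i => by
    rw [hp, hDP0', hDPN', equalizingPayment]
  refine ⟨sum_equalizingPayment u, fun i => ?_, fun q => ?_⟩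
  · rw [hdp, hDPN', disproportionality_equalizingPayment]
  · obtain ⟨i, hi⟩ := exists_expect_le_disproportionality u q
    exact ⟨i, by rw [hdp, hDPN']; exact hi⟩
end

section
/- In the additive-characteristics model, if agent 1's manipulated valuation differs from her true valuation only on characteristics that are present in her own old apartment o_1 and in every new apartment (increasing them by total z > 0), then the welfare-maximizing assignment is unchanged (any assignment maximizing ∑_i v_i(A_i) under true values also maximizes it under manipulated values), and the Minimum Disproportionality payment to agent 1 strictly increases (when n ≥ 2). -/
/-- Disproportionality of agent `i` under assignment `A` (zero payments). -/
noncomputable def DPa {Apt : Type*} {n : ℕ}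
    (v : Fin n → Apt → ℝ) (o A : Fin n → Apt) (i : Fin n) : ℝ :=
  (1 / (n : ℝ)) * ∑ j, (v i (A j) - v i (o j)) - (v i (A i) - v i (o i))

/-- The payment to agent `i` under the Minimum Disproportionality mechanism. -/
noncomputable def pay {Apt : Type*} {n : ℕ}
    (v : Fin n → Apt → ℝ) (o A : Fin n → Apt) (i : Fin n) : ℝ :=
  DPa v o A i - (∑ j, DPa v o A j) / n

/-- In the additive-characteristics model, if agent 1's manipulated valuation differs
from her true one only by adding `z > 0` to characteristics present in her old
apartment `o_1` and in every new apartment, then any welfare-maximizing assignment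
under the true values remains welfare-maximizing under the manipulated values, and
agent 1's Minimum Disproportionality payment strictly increases. -/
theorem stmt18 {Apt : Type*} {n : ℕ} (M : Finset Apt)
    (v v' : Fin (n + 2) → Apt → ℝ) (o : Fin (n + 2) → Apt) (z : ℝ) (hz : 0 < z)
    (hM : ∀ a ∈ M, v' 0 a = v 0 a + z)
    (ho1 : v' 0 (o 0) = v 0 (o 0) + z)
    (hoj : ∀ j : Fin (n + 2), j ≠ 0 → v' 0 (o j) = v 0 (o j))
    (hother : ∀ i : Fin (n + 2), i ≠ 0 → v' i = v i)
    (A : Fin (n + 2) → Apt) (hAinj : Function.Injective A) (hAmem : ∀ i, A i ∈ M)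
    (hAmax : ∀ B : Fin (n + 2) → Apt, Function.Injective B → (∀ i, B i ∈ M) →
      ∑ i, v i (B i) ≤ ∑ i, v i (A i)) :
    (∀ B : Fin (n + 2) → Apt, Function.Injective B → (∀ i, B i ∈ M) →
      ∑ i, v' i (B i) ≤ ∑ i, v' i (A i)) ∧
    pay v o A 0 < pay v' o A 0 := by
  have hNpos : (0 : ℝ) < (n + 2 : ℕ) := by positivity
  -- welfare shift lemma
  have h1 : ∀ B : Fin (n + 2) → Apt, (∀ i, B i ∈ M) →
      ∑ i, v' i (B i) = (∑ i, v i (B i)) + z := by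
    intro B hB
    rw [Fin.sum_univ_succ (f := fun i => v' i (B i)),
        Fin.sum_univ_succ (f := fun i => v i (B i)), hM _ (hB 0)]
    have : ∀ i ∈ Finset.univ, v' (Fin.succ i) (B (Fin.succ i))
        = v (Fin.succ i) (B (Fin.succ i)) := by
      intro i _; rw [hother _ (Fin.succ_ne_zero i)]
    rw [Finset.sum_congr rfl this]; ring
  refine ⟨fun B hBinj hBm => by
    rw [h1 B hBm, h1 A hAmem]
    linarith [hAmax B hBinj hBm], ?_⟩
  -- sums for agent 0
  have ho : ∑ j, v' 0 (o j) = (∑ j, v 0 (o j)) + z := by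
    rw [Fin.sum_univ_succ (f := fun j => v' 0 (o j)),
        Fin.sum_univ_succ (f := fun j => v 0 (o j)), ho1]
    have : ∀ i ∈ Finset.univ, v' 0 (o (Fin.succ i)) = v 0 (o (Fin.succ i)) := by
      intro i _; rw [hoj _ (Fin.succ_ne_zero i)]
    rw [Finset.sum_congr rfl this]; ring
  have hA' : ∑ j, v' 0 (A j) = (∑ j, v 0 (A j)) + (n + 2 : ℕ) * z := by
    have : ∀ j ∈ Finset.univ, v' 0 (A j) = v 0 (A j) + z := by
      intro j _; exact hM _ (hAmem j)
    rw [Finset.sum_congr rfl this, Finset.sum_add_distrib, Finset.sum_const]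
    simp [mul_comm]
  have hD0 : DPa v' o A 0 = DPa v o A 0 + (1 / (n + 2 : ℕ) : ℝ) * ((n + 1 : ℕ) * z) := by
    unfold DPa
    rw [Finset.sum_sub_distrib, Finset.sum_sub_distrib, hA', ho, hM _ (hAmem 0), ho1]
    push_cast
    field_simp
    ring
  have hDj : ∀ j : Fin (n + 2), j ≠ 0 → DPa v' o A j = DPa v o A j := by
    intro j hj; unfold DPa; rw [hother j hj]
  have hsum : ∑ j, DPa v' o A j
      = (∑ j, DPa v o A j) + (1 / (n + 2 : ℕ) : ℝ) * ((n + 1 : ℕ) * z) := by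
    rw [Fin.sum_univ_succ (f := fun j => DPa v' o A j),
        Fin.sum_univ_succ (f := fun j => DPa v o A j), hD0]
    have : ∀ i ∈ Finset.univ, DPa v' o A (Fin.succ i) = DPa v o A (Fin.succ i) := by
      intro i _; exact hDj _ (Fin.succ_ne_zero i)
    rw [Finset.sum_congr rfl this]; ring
  unfold pay
  rw [hD0, hsum]
  set c : ℝ := (1 / (n + 2 : ℕ) : ℝ) * ((n + 1 : ℕ) * z) with hc
  have hcpos : 0 < c := by positivity
  have h2 : c / (n + 2 : ℕ) < c := div_lt_self hcpos (by push_cast; linarith)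
  have : (∑ j, DPa v o A j + c) / (n + 2 : ℕ)
      = (∑ j, DPa v o A j) / (n + 2 : ℕ) + c / (n + 2 : ℕ) := by
    field_simp
  push_cast at h2 this ⊢
  rw [this]
  linarith
end

section
/- In the two-agent additive-characteristics setting where agent 1 increases the characteristics of T_+ by total z > 0 and decreases those of T_- by total y < 0 (so v'_1(o_1) = v_1(o_1) + z, v'_1(o_2) = v_1(o_2) + y, v'_1(a_1) = v_1(a_1) + z, v'_1(a_2) = v_1(a_2) + y), if agent 2's valuation satisfies v_1(a_1) - v_1(a_2) < v_2(a_1) - v_2(a_2) < v_1(a_1) - v_1(a_2) + z - y, then under truthful reporting the welfare-maximizing assignment gives a_2 to agent 1, under the manipulation it gives a_1 to agent 1, and agent 1's resulting utility (value of received apartment plus Minimum Disproportionality payment computed from reported values, evaluated with true values) is strictly lower under the manipulation. -/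
/-- Two-agent additive-characteristics manipulation: under the stated conditions the
truthful welfare-maximizing assignment gives `a_2` to agent 1, the manipulated one
gives `a_1` to agent 1, and agent 1's true utility is strictly lower under the
manipulation.  Here `vo1 vo2 va1 va2` are agent 1's true values of `o_1, o_2, a_1,
a_2`, `wo1 wo2 wa1 wa2` are agent 2's values, and agent 1's manipulated values are
`vo1 + z, vo2 + y, va1 + z, va2 + y`. -/
theorem stmt19 (vo1 vo2 va1 va2 wo1 wo2 wa1 wa2 z y : ℝ)
    (hz : 0 < z) (hy : y < 0)
    (h1 : va1 - va2 < wa1 - wa2)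
    (h2 : wa1 - wa2 < va1 - va2 + z - y)
    (p1t p1m : ℝ)
    -- payment to agent 1 under truthful reports, where agent 1 gets a_2, agent 2 gets a_1
    (hp1t : p1t = ((1 / 2) * ((va2 - vo1) + (va1 - vo2)) - (va2 - vo1))
      - (((1 / 2) * ((va2 - vo1) + (va1 - vo2)) - (va2 - vo1))
        + ((1 / 2) * ((wa2 - wo1) + (wa1 - wo2)) - (wa1 - wo2))) / 2)
    -- payment to agent 1 under manipulated reports, where agent 1 gets a_1, agent 2 gets a_2
    (hp1m : p1m = ((1 / 2) * (((va1 + z) - (vo1 + z)) + ((va2 + y) - (vo2 + y)))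
        - ((va1 + z) - (vo1 + z)))
      - (((1 / 2) * (((va1 + z) - (vo1 + z)) + ((va2 + y) - (vo2 + y)))
          - ((va1 + z) - (vo1 + z)))
        + ((1 / 2) * ((wa1 - wo1) + (wa2 - wo2)) - (wa2 - wo2))) / 2) :
    -- under truthful reports, giving a_2 to agent 1 maximizes welfare
    (va1 + wa2 < va2 + wa1) ∧
    -- under the manipulation, giving a_1 to agent 1 maximizes welfare
    ((va2 + y) + wa1 < (va1 + z) + wa2) ∧
    -- agent 1's true utility is strictly lower under the manipulation
    (va1 + p1m < va2 + p1t) := by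
  subst hp1t hp1m
  refine ⟨by linarith, by linarith, by linarith⟩
end
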